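/- BEDPP safe rule for the group lasso (Theorem 4.2): assume the group standardization condition (1/n)X_gᵀX_g = I for every g, let λ_m = max_{1≤g≤G} ‖X_gᵀy‖ / (n√(W_g)) > 0, let * denote a group attaining this maximum with data matrix X_* and size W_*, and set v̄ = X_* X_*ᵀ y. For any λ with 0 < λ ≤ λ_m and any group g, if β̂(λ) is a minimizer of h_λ and √( (λ + λ_m)² ‖X_gᵀy‖² − (2(λ_m² − λ²)/n) · yᵀX_g X_gᵀ v̄ + ((λ_m − λ)²/n²) ‖X_gᵀ v̄‖² ) < 2nλλ_m √(W_g) − (λ_m − λ) √( n‖y‖² − n²λ_m² W_* ), then β̂_g(λ) = 0. -/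

import Mathlib

open Finset

/-- limit lemma: a ≤ c + t*b for all small positive t implies a ≤ c. -/
lemma bedpp_aux_limit {a b c : ℝ} (hb : 0 ≤ b)
    (h : ∀ t : ℝ, 0 < t → t ≤ 1 → a ≤ c + t * b) : a ≤ c := by
  refine le_of_forall_pos_le_add fun ε hε => ?_
  have hbp : 0 < b + 1 := by linarith
  have ht0 : 0 < min 1 (ε / (b + 1)) := lt_min one_pos (div_pos hε hbp)
  have h1 := h _ ht0 (min_le_left _ _)
  have h2 : min 1 (ε / (b + 1)) * b ≤ ε := by
    have : min 1 (ε / (b + 1)) ≤ ε / (b + 1) := min_le_right _ _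
    have h3 : min 1 (ε / (b + 1)) * b ≤ (ε / (b + 1)) * b :=
      mul_le_mul_of_nonneg_right this hb
    have h4 : (ε / (b + 1)) * b ≤ ε := by
      rw [div_mul_eq_mul_div, div_le_iff₀ hbp]; nlinarith
    linarith
  linarith

/-- triangle inequality for Euclidean norms as sqrt of sums of squares. -/
lemma bedpp_aux_tri {ι : Type*} (s : Finset ι) (f g : ι → ℝ) :
    Real.sqrt (∑ i ∈ s, (f i + g i) ^ 2) ≤
      Real.sqrt (∑ i ∈ s, f i ^ 2) + Real.sqrt (∑ i ∈ s, g i ^ 2) := by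
  have hf : (0:ℝ) ≤ ∑ i ∈ s, f i ^ 2 := by positivity
  have hg : (0:ℝ) ≤ ∑ i ∈ s, g i ^ 2 := by positivity
  have cs := Real.sum_mul_le_sqrt_mul_sqrt s f g
  have hexp : ∑ i ∈ s, (f i + g i) ^ 2
      = ∑ i ∈ s, f i ^ 2 + 2 * ∑ i ∈ s, f i * g i + ∑ i ∈ s, g i ^ 2 := by
    calc ∑ i ∈ s, (f i + g i) ^ 2
        = ∑ i ∈ s, (f i ^ 2 + 2 * (f i * g i) + g i ^ 2) :=
          Finset.sum_congr rfl fun i _ => by ring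
      _ = _ := by rw [Finset.sum_add_distrib, Finset.sum_add_distrib, Finset.mul_sum]
  have h1 : ∑ i ∈ s, (f i + g i) ^ 2
      ≤ (Real.sqrt (∑ i ∈ s, f i ^ 2) + Real.sqrt (∑ i ∈ s, g i ^ 2)) ^ 2 := by
    have e1 := Real.sq_sqrt hf
    have e2 := Real.sq_sqrt hg
    nlinarith
  calc Real.sqrt (∑ i ∈ s, (f i + g i) ^ 2)
      ≤ Real.sqrt ((Real.sqrt (∑ i ∈ s, f i ^ 2) + Real.sqrt (∑ i ∈ s, g i ^ 2)) ^ 2) :=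
        Real.sqrt_le_sqrt h1
    _ = _ := Real.sqrt_sq (by positivity)

/-- swap a double sum: ⟨w, M d⟩ = ⟨d, Mᵀ w⟩. -/
lemma bedpp_aux_swap {n m : ℕ} (M : Matrix (Fin n) (Fin m) ℝ) (w : Fin n → ℝ) (d : Fin m → ℝ) :
    ∑ i, w i * (∑ t, M i t * d t) = ∑ t, d t * (∑ i, M i t * w i) := by
  simp_rw [Finset.mul_sum]
  rw [Finset.sum_comm]
  exact Finset.sum_congr rfl fun t _ => Finset.sum_congr rfl fun i _ => by ring

/-- under standardization, ‖Mq‖² = n‖q‖². -/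
lemma bedpp_aux_normMq {n m : ℕ} (M : Matrix (Fin n) (Fin m) ℝ)
    (hstd : ∀ t t' : Fin m, (1 / (n : ℝ)) * ∑ i, M i t * M i t' = if t = t' then 1 else 0)
    (hn : 0 < n) (q : Fin m → ℝ) :
    ∑ i, (∑ t, M i t * q t) ^ 2 = (n : ℝ) * ∑ t, (q t) ^ 2 := by
  have hn' : (n:ℝ) ≠ 0 := Nat.cast_ne_zero.mpr hn.ne'
  have hstd' : ∀ t t' : Fin m, ∑ i, M i t * M i t' = if t = t' then (n:ℝ) else 0 := by
    intro t t'
    have h := hstd t t'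
    have h2 : (∑ i, M i t * M i t') = (n:ℝ) * (if t = t' then 1 else 0) := by
      rw [← h]; field_simp
    split_ifs at h2 ⊢ <;> simpa using h2
  calc ∑ i, (∑ t, M i t * q t) ^ 2
      = ∑ i, ∑ t, ∑ t', (q t * q t') * (M i t * M i t') := by
        refine Finset.sum_congr rfl fun i _ => ?_
        rw [sq, Finset.sum_mul_sum]
        exact Finset.sum_congr rfl fun t _ => Finset.sum_congr rfl fun t' _ => by ring
    _ = ∑ t, ∑ t', (q t * q t') * ∑ i, M i t * M i t' := by
        rw [Finset.sum_comm]
        refine Finset.sum_congr rfl fun t _ => ?_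
        rw [Finset.sum_comm]
        refine Finset.sum_congr rfl fun t' _ => ?_
        rw [Finset.mul_sum]
    _ = ∑ t, (q t)^2 * (n:ℝ) := by
        refine Finset.sum_congr rfl fun t _ => ?_
        rw [Finset.sum_eq_single t]
        · simp [hstd', sq]
        · intro t' _ ht'; simp [hstd', (Ne.symm ht')]
        · simp
    _ = (n : ℝ) * ∑ t, (q t) ^ 2 := by rw [← Finset.sum_mul]; ring

/-- operator norm bound: ‖Mᵀw‖² ≤ n‖w‖². -/
lemma bedpp_aux_opnorm {n m : ℕ} (M : Matrix (Fin n) (Fin m) ℝ)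
    (hstd : ∀ t t' : Fin m, (1 / (n : ℝ)) * ∑ i, M i t * M i t' = if t = t' then 1 else 0)
    (hn : 0 < n) (w : Fin n → ℝ) :
    ∑ t, (∑ i, M i t * w i) ^ 2 ≤ (n : ℝ) * ∑ i, (w i) ^ 2 := by
  let q : Fin m → ℝ := fun t => ∑ i, M i t * w i
  have hQ : (0:ℝ) ≤ ∑ t, (q t) ^ 2 := by positivity
  have hw : (0:ℝ) ≤ ∑ i, (w i) ^ 2 := by positivity
  have h1 : ∑ i, (∑ t, M i t * q t) * w i = ∑ t, (q t) ^ 2 := by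
    have := bedpp_aux_swap M w q
    calc ∑ i, (∑ t, M i t * q t) * w i = ∑ i, w i * (∑ t, M i t * q t) := by
          exact Finset.sum_congr rfl fun i _ => by ring
      _ = ∑ t, q t * (∑ i, M i t * w i) := bedpp_aux_swap M w q
      _ = ∑ t, (q t)^2 := by
          refine Finset.sum_congr rfl fun t _ => ?_
          have : (∑ i, M i t * w i) = q t := rfl
          rw [this, sq]
  have h2 := bedpp_aux_normMq M hstd hn q
  have cs := Finset.sum_mul_sq_le_sq_mul_sq Finset.univ (fun i => ∑ t, M i t * q t) w
  rw [h1, h2] at cs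
  have key : ∑ t, (q t) ^ 2 ≤ (n : ℝ) * ∑ i, (w i) ^ 2 := by
    nlinarith [hQ, hw, mul_nonneg (Nat.cast_nonneg n : (0:ℝ) ≤ n) hw]
  exact key

/-- sum over update. -/
lemma bedpp_aux_update {G : ℕ} {W : Fin G → ℕ} (β : ∀ g, Fin (W g) → ℝ) (g : Fin G)
    (v : Fin (W g) → ℝ) (F : ∀ g', (Fin (W g') → ℝ) → ℝ) :
    ∑ g', F g' (Function.update β g v g') = ∑ g', F g' (β g') - F g (β g) + F g v := by
  have h1 : ∀ g' ∈ Finset.univ.erase g, F g' (Function.update β g v g') = F g' (β g') := by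
    intro g' hg'
    rw [Function.update_of_ne (Finset.mem_erase.mp hg').1]
  have e1 : ∑ g', F g' (Function.update β g v g')
      = (∑ g' ∈ Finset.univ.erase g, F g' (β g')) + F g v := by
    rw [← Finset.sum_erase_add Finset.univ _ (Finset.mem_univ g), Function.update_self]
    congr 1
    exact Finset.sum_congr rfl h1
  have e2 : ∑ g', F g' (β g') = (∑ g' ∈ Finset.univ.erase g, F g' (β g')) + F g (β g) :=
    (Finset.sum_erase_add _ _ (Finset.mem_univ g)).symm
  rw [e1, e2]
  ring

/-- The group lasso objective
`h_λ(β) = (1/(2n))‖y − Σ_g X_g β_g‖² + λ Σ_g √(W_g)‖β_g‖`. -/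
noncomputable def grpLassoObj (n G : ℕ) (W : Fin G → ℕ)
    (X : ∀ g : Fin G, Matrix (Fin n) (Fin (W g)) ℝ) (y : Fin n → ℝ) (lam : ℝ)
    (β : ∀ g : Fin G, Fin (W g) → ℝ) : ℝ :=
  (1 / (2 * (n : ℝ))) * ∑ i, (y i - ∑ g, ∑ t, X g i t * β g t) ^ 2 +
    lam * ∑ g, Real.sqrt (W g) * Real.sqrt (∑ t, (β g t) ^ 2)

set_option maxHeartbeats 2000000 in
/-- BEDPP safe rule for the group lasso (Theorem 4.2): under group standardization
`(1/n)X_gᵀX_g = I`, with `λ_m = max_g ‖X_gᵀy‖/(n√(W_g)) > 0` attained by group `gstar`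
(data matrix `X_*`, size `W_*`), `v̄ = X_* X_*ᵀ y`, and `0 < λ ≤ λ_m`, if
`√((λ + λ_m)²‖X_gᵀy‖² − (2(λ_m² − λ²)/n)·yᵀX_g X_gᵀ v̄ + ((λ_m − λ)²/n²)‖X_gᵀ v̄‖²)
  < 2nλλ_m√(W_g) − (λ_m − λ)√(n‖y‖² − n²λ_m² W_*)`,
then any minimizer `β̂(λ)` of `h_λ` satisfies `β̂_g(λ) = 0`. -/
theorem bedpp_grp_lasso (n G : ℕ) (hn : 0 < n) (hG : 0 < G)
    (W : Fin G → ℕ) (hW : ∀ g, 0 < W g)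
    (X : ∀ g : Fin G, Matrix (Fin n) (Fin (W g)) ℝ) (y : Fin n → ℝ)
    -- group standardization condition: (1/n) X_gᵀ X_g = I for every g
    (hstd : ∀ g, ∀ t t' : Fin (W g),
      (1 / (n : ℝ)) * ∑ i, X g i t * X g i t' = if t = t' then 1 else 0)
    -- λ_m is the maximum of ‖X_gᵀy‖/(n√(W_g)), attained at group gstar, and positive
    (lm : ℝ) (hlm : 0 < lm)
    (hub : ∀ g, Real.sqrt (∑ t, (∑ i, X g i t * y i) ^ 2) /
      ((n : ℝ) * Real.sqrt (W g)) ≤ lm)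
    (gstar : Fin G)
    (hatt : Real.sqrt (∑ t, (∑ i, X gstar i t * y i) ^ 2) /
      ((n : ℝ) * Real.sqrt (W gstar)) = lm)
    -- v̄ = X_* X_*ᵀ y
    (vb : Fin n → ℝ)
    (hvb : ∀ i, vb i = ∑ t, X gstar i t * (∑ i', X gstar i' t * y i'))
    (lam : ℝ) (hlam : 0 < lam) (hlamle : lam ≤ lm)
    (βh : ∀ g : Fin G, Fin (W g) → ℝ)
    (hmin : ∀ β : ∀ g : Fin G, Fin (W g) → ℝ,
      grpLassoObj n G W X y lam βh ≤ grpLassoObj n G W X y lam β)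
    (g : Fin G)
    (hrule : Real.sqrt ((lam + lm) ^ 2 * (∑ t, (∑ i, X g i t * y i) ^ 2) -
        (2 * (lm ^ 2 - lam ^ 2) / (n : ℝ)) *
          (∑ t, (∑ i, X g i t * y i) * (∑ i, X g i t * vb i)) +
        ((lm - lam) ^ 2 / (n : ℝ) ^ 2) * (∑ t, (∑ i, X g i t * vb i) ^ 2)) <
      2 * (n : ℝ) * lam * lm * Real.sqrt (W g) -
        (lm - lam) * Real.sqrt ((n : ℝ) * (∑ i, (y i) ^ 2) -
          (n : ℝ) ^ 2 * lm ^ 2 * (W gstar))) :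
    βh g = 0 := by
  classical
  have hn' : (0:ℝ) < n := Nat.cast_pos.mpr hn
  have hnne : (n:ℝ) ≠ 0 := hn'.ne'
  set r : Fin n → ℝ := fun i => y i - ∑ g', ∑ t, X g' i t * βh g' t with hr
  have hri : ∀ i, y i - (∑ g', ∑ t, X g' i t * βh g' t) = r i := fun i => by rw [hr]
  -- ★: basic variational inequality from minimality
  have star : ∀ (g0 : Fin G) (v : Fin (W g0) → ℝ),
      2 * ∑ i, r i * (∑ t, X g0 i t * (v t - βh g0 t)) ≤
        (∑ i, (∑ t, X g0 i t * (v t - βh g0 t)) ^ 2)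
        + 2 * (n:ℝ) * lam * Real.sqrt (W g0) *
          (Real.sqrt (∑ t, (v t)^2) - Real.sqrt (∑ t, (βh g0 t)^2)) := by
    intro g0 v
    have hm := hmin (Function.update βh g0 v)
    unfold grpLassoObj at hm
    have hres : ∀ i, (∑ g', ∑ t, X g' i t * Function.update βh g0 v g' t)
        = (∑ g', ∑ t, X g' i t * βh g' t) + (∑ t, X g0 i t * (v t - βh g0 t)) := by
      intro i
      rw [bedpp_aux_update βh g0 v (fun g' b => ∑ t, X g' i t * b t)]
      have e : ∑ t, X g0 i t * (v t - βh g0 t)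
          = (∑ t, X g0 i t * v t) - ∑ t, X g0 i t * βh g0 t := by
        rw [← Finset.sum_sub_distrib]
        exact Finset.sum_congr rfl fun t _ => by ring
      rw [e]; ring
    have hpen : ∑ g', Real.sqrt (W g') * Real.sqrt (∑ t, (Function.update βh g0 v g' t)^2)
        = (∑ g', Real.sqrt (W g') * Real.sqrt (∑ t, (βh g' t)^2))
          - Real.sqrt (W g0) * Real.sqrt (∑ t, (βh g0 t)^2)
          + Real.sqrt (W g0) * Real.sqrt (∑ t, (v t)^2) :=
      bedpp_aux_update βh g0 v (fun g' b => Real.sqrt (W g') * Real.sqrt (∑ t, (b t)^2))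
    simp only [hres] at hm
    rw [hpen] at hm
    have hres2 : ∀ i, (y i - ((∑ g', ∑ t, X g' i t * βh g' t)
          + (∑ t, X g0 i t * (v t - βh g0 t))))^2
        = (r i - (∑ t, X g0 i t * (v t - βh g0 t)))^2 := fun i => by
      rw [← hri i]; ring
    simp only [hres2] at hm
    simp only [hri] at hm
    have hexp : ∑ i, (r i - (∑ t, X g0 i t * (v t - βh g0 t)))^2
        = ∑ i, (r i)^2 - 2 * ∑ i, r i * (∑ t, X g0 i t * (v t - βh g0 t))
          + ∑ i, (∑ t, X g0 i t * (v t - βh g0 t))^2 := by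
      calc ∑ i, (r i - (∑ t, X g0 i t * (v t - βh g0 t)))^2
          = ∑ i, ((r i)^2 - 2*(r i * (∑ t, X g0 i t * (v t - βh g0 t)))
              + (∑ t, X g0 i t * (v t - βh g0 t))^2) :=
            Finset.sum_congr rfl fun i _ => by ring
        _ = _ := by
            rw [Finset.sum_add_distrib, Finset.sum_sub_distrib, Finset.mul_sum]
    have e : ∀ A P : ℝ, (2*(n:ℝ)) * ((1/(2*(n:ℝ)))*A + lam*P) = A + 2*(n:ℝ)*lam*P := by
      intro A P; field_simp
    have hm2 := mul_le_mul_of_nonneg_left hm (by positivity : (0:ℝ) ≤ 2*(n:ℝ))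
    rw [e, e] at hm2
    nlinarith [hm2, hexp]
  -- F2 : ⟨r, X_g βh_g⟩ ≥ nλ√W ‖βh_g‖
  have hF2 : ∀ g0 : Fin G, (n:ℝ)*lam*Real.sqrt (W g0) * Real.sqrt (∑ t, (βh g0 t)^2)
      ≤ ∑ i, r i * (∑ t, X g0 i t * βh g0 t) := by
    intro g0
    refine bedpp_aux_limit (b := (∑ i, (∑ t, X g0 i t * βh g0 t)^2)/2) (by positivity) ?_
    intro t ht0 ht1
    have hst := star g0 (fun s => (1-t)*βh g0 s)
    have hd : ∀ i, (∑ t', X g0 i t' * ((1-t)*βh g0 t' - βh g0 t'))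
        = -t * (∑ t', X g0 i t' * βh g0 t') := by
      intro i
      rw [Finset.mul_sum]
      exact Finset.sum_congr rfl fun t' _ => by ring
    have hv : Real.sqrt (∑ t', ((1-t)*βh g0 t')^2)
        = (1-t) * Real.sqrt (∑ t', (βh g0 t')^2) := by
      have : ∑ t', ((1-t)*βh g0 t')^2 = (1-t)^2 * ∑ t', (βh g0 t')^2 := by
        rw [Finset.mul_sum]; exact Finset.sum_congr rfl fun t' _ => by ring
      rw [this, Real.sqrt_mul (sq_nonneg _), Real.sqrt_sq (by linarith)]
    simp only [hd, hv] at hst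
    have hsq : ∀ i, (-t * (∑ t', X g0 i t' * βh g0 t'))^2
        = t^2 * (∑ t', X g0 i t' * βh g0 t')^2 := fun i => by ring
    simp only [hsq] at hst
    rw [← Finset.mul_sum] at hst
    have e1 : ∑ x, r x * (-t * (∑ t', X g0 x t' * βh g0 t'))
        = -t * ∑ x, r x * (∑ t', X g0 x t' * βh g0 t') := by
      rw [Finset.mul_sum]
      exact Finset.sum_congr rfl fun x _ => by ring
    rw [e1] at hst
    nlinarith [hst, ht0]
  -- directional inequality and F1
  have hdir : ∀ (g0 : Fin G) (d : Fin (W g0) → ℝ),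
      ∑ i, r i * (∑ t, X g0 i t * d t)
        ≤ (n:ℝ)*lam*Real.sqrt (W g0) * Real.sqrt (∑ t, (d t)^2) := by
    intro g0 d
    refine bedpp_aux_limit (b := (∑ i, (∑ t, X g0 i t * d t)^2)/2) (by positivity) ?_
    intro t ht0 ht1
    have hst := star g0 (fun s => βh g0 s + t * d s)
    have hd : ∀ i, (∑ t', X g0 i t' * ((βh g0 t' + t * d t') - βh g0 t'))
        = t * (∑ t', X g0 i t' * d t') := by
      intro i
      rw [Finset.mul_sum]
      exact Finset.sum_congr rfl fun t' _ => by ring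
    simp only [hd] at hst
    have hsq : ∀ i, (t * (∑ t', X g0 i t' * d t'))^2
        = t^2 * (∑ t', X g0 i t' * d t')^2 := fun i => by ring
    simp only [hsq] at hst
    rw [← Finset.mul_sum] at hst
    have e1 : ∑ x, r x * (t * (∑ t', X g0 x t' * d t'))
        = t * ∑ x, r x * (∑ t', X g0 x t' * d t') := by
      rw [Finset.mul_sum]
      exact Finset.sum_congr rfl fun x _ => by ring
    rw [e1] at hst
    have htri : Real.sqrt (∑ t', (βh g0 t' + t * d t')^2)
        ≤ Real.sqrt (∑ t', (βh g0 t')^2) + t * Real.sqrt (∑ t', (d t')^2) := by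
      have h1 := bedpp_aux_tri Finset.univ (fun t' => βh g0 t') (fun t' => t * d t')
      have h2 : Real.sqrt (∑ t', (t * d t')^2) = t * Real.sqrt (∑ t', (d t')^2) := by
        have : ∑ t', (t * d t')^2 = t^2 * ∑ t', (d t')^2 := by
          rw [Finset.mul_sum]; exact Finset.sum_congr rfl fun t' _ => by ring
        rw [this, Real.sqrt_mul (sq_nonneg _), Real.sqrt_sq ht0.le]
      rw [h2] at h1
      exact h1
    have hWpos : (0:ℝ) ≤ Real.sqrt (W g0) := Real.sqrt_nonneg _
    have hstep : 2 * (t * ∑ i, r i * (∑ t', X g0 i t' * d t'))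
        ≤ t^2 * ∑ i, (∑ t', X g0 i t' * d t')^2
          + 2*(n:ℝ)*lam*Real.sqrt (W g0) * (t * Real.sqrt (∑ t', (d t')^2)) := by
      have hmono : 2*(n:ℝ)*lam*Real.sqrt (W g0) *
          (Real.sqrt (∑ t', (βh g0 t' + t * d t')^2) - Real.sqrt (∑ t', (βh g0 t')^2))
          ≤ 2*(n:ℝ)*lam*Real.sqrt (W g0) * (t * Real.sqrt (∑ t', (d t')^2)) := by
        apply mul_le_mul_of_nonneg_left _ (by positivity)
        linarith [htri]
      linarith [hst, hmono]
    nlinarith [hstep, ht0]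
  have hF1 : ∀ g0 : Fin G, Real.sqrt (∑ t, (∑ i, X g0 i t * r i)^2)
      ≤ (n:ℝ)*lam*Real.sqrt (W g0) := by
    intro g0
    have h1 := hdir g0 (fun t => ∑ i, X g0 i t * r i)
    rw [bedpp_aux_swap (X g0) r (fun t => ∑ i, X g0 i t * r i)] at h1
    have e : ∑ t, (∑ i, X g0 i t * r i) * (∑ i, X g0 i t * r i)
        = ∑ t, (∑ i, X g0 i t * r i)^2 :=
      Finset.sum_congr rfl fun t _ => by ring
    rw [e] at h1
    have hQ : (0:ℝ) ≤ ∑ t, (∑ i, X g0 i t * r i)^2 := by positivity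
    have hs := Real.sq_sqrt hQ
    nlinarith [h1, hs, Real.sqrt_nonneg (∑ t, (∑ i, X g0 i t * r i)^2),
      (mul_nonneg (mul_nonneg hn'.le hlam.le) (Real.sqrt_nonneg ((W g0 : ℝ))))]
  have hWpos : ∀ g0 : Fin G, (0:ℝ) < Real.sqrt (W g0) := fun g0 =>
    Real.sqrt_pos.mpr (by exact_mod_cast hW g0)
  have hub' : ∀ g0 : Fin G, Real.sqrt (∑ t, (∑ i, X g0 i t * y i)^2)
      ≤ (n:ℝ)*lm*Real.sqrt (W g0) := by
    intro g0
    have h := hub g0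
    rw [div_le_iff₀ (mul_pos hn' (hWpos g0))] at h
    nlinarith [h]
  have hatt2 : ∑ t, (∑ i, X gstar i t * y i)^2 = (n:ℝ)^2*lm^2*(W gstar) := by
    have h := hatt
    rw [div_eq_iff (mul_pos hn' (hWpos gstar)).ne'] at h
    have hS : (0:ℝ) ≤ ∑ t, (∑ i, X gstar i t * y i)^2 := by positivity
    have h2 := congrArg (fun x : ℝ => x^2) h
    replace h2 : (Real.sqrt (∑ t, (∑ i, X gstar i t * y i) ^ 2)) ^ 2
        = (lm * ((n:ℝ) * Real.sqrt (W gstar))) ^ 2 := h2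
    rw [Real.sq_sqrt hS] at h2
    rw [h2, mul_pow, mul_pow, Real.sq_sqrt (Nat.cast_nonneg _)]
    ring
  -- C1 : ball constraint
  have hgrp : ∀ g0 : Fin G,
      lam * (∑ t, βh g0 t * (∑ i, X g0 i t * y i))
        ≤ lm * (∑ i, r i * (∑ t, X g0 i t * βh g0 t)) := by
    intro g0
    have cs := Real.sum_mul_le_sqrt_mul_sqrt Finset.univ
      (fun t => βh g0 t) (fun t => ∑ i, X g0 i t * y i)
    have hsb : (0:ℝ) ≤ Real.sqrt (∑ t, (βh g0 t)^2) := Real.sqrt_nonneg _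
    calc lam * (∑ t, βh g0 t * (∑ i, X g0 i t * y i))
        ≤ lam * (Real.sqrt (∑ t, (βh g0 t)^2) *
            Real.sqrt (∑ t, (∑ i, X g0 i t * y i)^2)) :=
          mul_le_mul_of_nonneg_left cs hlam.le
      _ ≤ lam * (Real.sqrt (∑ t, (βh g0 t)^2) * ((n:ℝ)*lm*Real.sqrt (W g0))) := by
          apply mul_le_mul_of_nonneg_left _ hlam.le
          exact mul_le_mul_of_nonneg_left (hub' g0) hsb
      _ = lm * ((n:ℝ)*lam*Real.sqrt (W g0) * Real.sqrt (∑ t, (βh g0 t)^2)) := by ring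
      _ ≤ lm * (∑ i, r i * (∑ t, X g0 i t * βh g0 t)) :=
          mul_le_mul_of_nonneg_left (hF2 g0) hlm.le
  have hsum : ∑ g0 : Fin G, lam * (∑ t, βh g0 t * (∑ i, X g0 i t * y i))
      ≤ ∑ g0 : Fin G, lm * (∑ i, r i * (∑ t, X g0 i t * βh g0 t)) :=
    Finset.sum_le_sum (fun g0 _ => hgrp g0)
  rw [← Finset.mul_sum, ← Finset.mul_sum] at hsum
  have hswap1 : ∑ g0 : Fin G, ∑ t, βh g0 t * (∑ i, X g0 i t * y i)
      = ∑ i, y i * (∑ g0 : Fin G, ∑ t, X g0 i t * βh g0 t) := by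
    have e1 : ∀ g0 : Fin G, ∑ t, βh g0 t * (∑ i, X g0 i t * y i)
        = ∑ i, y i * (∑ t, X g0 i t * βh g0 t) :=
      fun g0 => (bedpp_aux_swap (X g0) y (βh g0)).symm
    simp only [e1]
    rw [Finset.sum_comm]
    exact Finset.sum_congr rfl fun i _ => by rw [Finset.mul_sum]
  have hswap2 : ∑ g0 : Fin G, ∑ i, r i * (∑ t, X g0 i t * βh g0 t)
      = ∑ i, r i * (∑ g0 : Fin G, ∑ t, X g0 i t * βh g0 t) := by
    rw [Finset.sum_comm]
    exact Finset.sum_congr rfl fun i _ => by rw [Finset.mul_sum]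
  rw [hswap1, hswap2] at hsum
  have hSr : ∀ i, (∑ g0 : Fin G, ∑ t, X g0 i t * βh g0 t) = y i - r i := fun i => by
    rw [← hri i]; ring
  simp only [hSr] at hsum
  have e2 : ∑ i, y i * (y i - r i) = ∑ i, (y i)^2 - ∑ i, r i * y i := by
    rw [← Finset.sum_sub_distrib]
    exact Finset.sum_congr rfl fun i _ => by ring
  have e3 : ∑ i, r i * (y i - r i) = ∑ i, r i * y i - ∑ i, (r i)^2 := by
    rw [← Finset.sum_sub_distrib]
    exact Finset.sum_congr rfl fun i _ => by ring
  rw [e2, e3] at hsum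
  have hC1 : lm * ∑ i, (r i)^2 - (lm+lam) * ∑ i, r i * y i + lam * ∑ i, (y i)^2 ≤ 0 := by
    nlinarith [hsum]
  -- C2 : halfspace constraint
  have hqsw : ∑ i, r i * vb i
      = ∑ t, (∑ i', X gstar i' t * y i') * (∑ i, X gstar i t * r i) := by
    have e4 : ∀ i, r i * vb i
        = r i * (∑ t, X gstar i t * (∑ i', X gstar i' t * y i')) := fun i => by
      rw [hvb i]
    simp only [e4]
    exact bedpp_aux_swap (X gstar) r (fun t => ∑ i', X gstar i' t * y i')
  have hC2 : lm * (∑ i, r i * vb i) ≤ lam * (n:ℝ)^2 * lm^2 * (W gstar) := by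
    have cs := Real.sum_mul_le_sqrt_mul_sqrt Finset.univ
      (fun t => ∑ i', X gstar i' t * y i') (fun t => ∑ i, X gstar i t * r i)
    have h1 : Real.sqrt (∑ t, (∑ i', X gstar i' t * y i')^2)
        = (n:ℝ)*lm*Real.sqrt (W gstar) := by
      rw [hatt2]
      rw [show (n:ℝ)^2*lm^2*(W gstar) = ((n:ℝ)*lm)^2 * (W gstar) by ring,
        Real.sqrt_mul (sq_nonneg _), Real.sqrt_sq (by positivity)]
    have h2 := hF1 gstar
    have hWW : Real.sqrt ((W gstar : ℝ)) * Real.sqrt ((W gstar : ℝ)) = (W gstar : ℝ) :=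
      Real.mul_self_sqrt (Nat.cast_nonneg _)
    have h3 : ∑ i, r i * vb i ≤ (n:ℝ)^2*lm*lam*(W gstar) := by
      rw [hqsw]
      calc ∑ t, (∑ i', X gstar i' t * y i') * (∑ i, X gstar i t * r i)
          ≤ Real.sqrt (∑ t, (∑ i', X gstar i' t * y i')^2) *
              Real.sqrt (∑ t, (∑ i, X gstar i t * r i)^2) := cs
        _ ≤ ((n:ℝ)*lm*Real.sqrt (W gstar)) * ((n:ℝ)*lam*Real.sqrt (W gstar)) := by
            rw [h1]
            apply mul_le_mul_of_nonneg_left h2 (by positivity)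
        _ = (n:ℝ)^2*lm*lam*(Real.sqrt ((W gstar:ℝ)) * Real.sqrt ((W gstar:ℝ))) := by ring
        _ = (n:ℝ)^2*lm*lam*(W gstar) := by rw [hWW]
    nlinarith [h3, hlm.le]
  -- moments of vb
  have hV : ∑ i, (vb i)^2 = (n:ℝ)^3*lm^2*(W gstar) := by
    have e5 : ∀ i, (vb i)^2
        = (∑ t, X gstar i t * (∑ i', X gstar i' t * y i'))^2 := fun i => by rw [hvb i]
    calc ∑ i, (vb i)^2
        = ∑ i, (∑ t, X gstar i t * (∑ i', X gstar i' t * y i'))^2 :=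
          Finset.sum_congr rfl fun i _ => e5 i
      _ = (n:ℝ) * ∑ t, (∑ i', X gstar i' t * y i')^2 :=
          bedpp_aux_normMq (X gstar) (hstd gstar) hn _
      _ = (n:ℝ)^3*lm^2*(W gstar) := by rw [hatt2]; ring
  have hYV : ∑ i, y i * vb i = (n:ℝ)^2*lm^2*(W gstar) := by
    have e6 : ∀ i, y i * vb i
        = y i * (∑ t, X gstar i t * (∑ i', X gstar i' t * y i')) := fun i => by rw [hvb i]
    calc ∑ i, y i * vb i
        = ∑ i, y i * (∑ t, X gstar i t * (∑ i', X gstar i' t * y i')) :=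
          Finset.sum_congr rfl fun i _ => e6 i
      _ = ∑ t, (∑ i', X gstar i' t * y i') * (∑ i, X gstar i t * y i) :=
          bedpp_aux_swap (X gstar) y _
      _ = ∑ t, (∑ i', X gstar i' t * y i')^2 :=
          Finset.sum_congr rfl fun t _ => by ring
      _ = (n:ℝ)^2*lm^2*(W gstar) := hatt2
  -- the shifted vector w and its norm bound
  set w : Fin n → ℝ :=
    fun i => 2*(n:ℝ)*lm*r i - (n:ℝ)*(lam+lm)*y i + (lm-lam)*vb i with hw
  have hexpw : ∑ i, (w i)^2
      = (2*(n:ℝ)*lm)^2 * (∑ i, (r i)^2) + ((n:ℝ)*(lam+lm))^2 * (∑ i, (y i)^2)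
        + (lm-lam)^2 * (∑ i, (vb i)^2)
        - 2*(2*(n:ℝ)*lm)*((n:ℝ)*(lam+lm)) * (∑ i, r i * y i)
        + 2*(2*(n:ℝ)*lm)*(lm-lam) * (∑ i, r i * vb i)
        - 2*((n:ℝ)*(lam+lm))*(lm-lam) * (∑ i, y i * vb i) := by
    have e7 : ∀ i, (w i)^2
        = (2*(n:ℝ)*lm)^2 * (r i)^2 + ((n:ℝ)*(lam+lm))^2 * (y i)^2
          + (lm-lam)^2 * (vb i)^2
          - 2*(2*(n:ℝ)*lm)*((n:ℝ)*(lam+lm)) * (r i * y i)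
          + 2*(2*(n:ℝ)*lm)*(lm-lam) * (r i * vb i)
          - 2*((n:ℝ)*(lam+lm))*(lm-lam) * (y i * vb i) := fun i => by
      rw [hw]; ring
    rw [Finset.sum_congr rfl fun i _ => e7 i]
    simp only [Finset.sum_add_distrib, Finset.sum_sub_distrib, ← Finset.mul_sum]
  have hwbound : ∑ i, (w i)^2
      ≤ (n:ℝ)^2*(lm-lam)^2 * ((∑ i, (y i)^2) - (n:ℝ)*lm^2*(W gstar)) := by
    have hC1s := mul_le_mul_of_nonneg_left hC1
      (by positivity : (0:ℝ) ≤ 4*(n:ℝ)^2*lm)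
    rw [mul_zero] at hC1s
    have hfac : (0:ℝ) ≤ 4*(n:ℝ)*(lm-lam) := by
      apply mul_nonneg (by positivity)
      linarith
    have hC2e : lm * (∑ i, r i * vb i) - lam * (n:ℝ)^2*lm^2*(W gstar) ≤ 0 := by
      linarith [hC2]
    have hC2s := mul_le_mul_of_nonneg_left hC2e hfac
    rw [mul_zero] at hC2s
    have hid : ∑ i, (w i)^2
        = (n:ℝ)^2*(lm-lam)^2 * ((∑ i, (y i)^2) - (n:ℝ)*lm^2*(W gstar))
          + 4*(n:ℝ)^2*lm *
            (lm * ∑ i, (r i)^2 - (lm+lam) * ∑ i, r i * y i + lam * ∑ i, (y i)^2)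
          + 4*(n:ℝ)*(lm-lam) *
            (lm * (∑ i, r i * vb i) - lam * (n:ℝ)^2*lm^2*(W gstar)) := by
      rw [hexpw, hV, hYV]
      ring
    rw [hid]
    linarith [hC1s, hC2s]
  -- operator norm step
  have hXw : ∑ t, (∑ i, X g i t * w i)^2 ≤ (n:ℝ) * ∑ i, (w i)^2 :=
    bedpp_aux_opnorm (X g) (hstd g) hn w
  have hXw2 : ∑ t, (∑ i, X g i t * w i)^2
      ≤ ((lm-lam)*(n:ℝ))^2 * ((n:ℝ)*(∑ i, (y i)^2) - (n:ℝ)^2*lm^2*(W gstar)) := by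
    nlinarith [hXw, hwbound, hn'.le]
  have hsqrtXw : Real.sqrt (∑ t, (∑ i, X g i t * w i)^2)
      ≤ ((lm-lam)*(n:ℝ)) *
        Real.sqrt ((n:ℝ)*(∑ i, (y i)^2) - (n:ℝ)^2*lm^2*(W gstar)) := by
    have h := Real.sqrt_le_sqrt hXw2
    rw [Real.sqrt_mul (sq_nonneg _), Real.sqrt_sq (by nlinarith [hn'.le] : (0:ℝ) ≤ (lm-lam)*(n:ℝ))] at h
    exact h
  -- decomposition and triangle inequality
  have hdec : ∀ t : Fin (W g), 2*(n:ℝ)*lm * (∑ i, X g i t * r i)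
      = ((n:ℝ)*(lam+lm)*(∑ i, X g i t * y i) - (lm-lam)*(∑ i, X g i t * vb i))
        + (∑ i, X g i t * w i) := by
    intro t
    have e8 : ∑ i, X g i t * w i
        = 2*(n:ℝ)*lm*(∑ i, X g i t * r i) - (n:ℝ)*(lam+lm)*(∑ i, X g i t * y i)
          + (lm-lam)*(∑ i, X g i t * vb i) := by
      calc ∑ i, X g i t * w i
          = ∑ i, (2*(n:ℝ)*lm*(X g i t * r i) - (n:ℝ)*(lam+lm)*(X g i t * y i)
              + (lm-lam)*(X g i t * vb i)) :=
            Finset.sum_congr rfl fun i _ => by rw [hw]; ring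
        _ = _ := by
            simp only [Finset.sum_add_distrib, Finset.sum_sub_distrib, ← Finset.mul_sum]
    rw [e8]; ring
  have htri2 : Real.sqrt (∑ t, (2*(n:ℝ)*lm * (∑ i, X g i t * r i))^2)
      ≤ Real.sqrt (∑ t, ((n:ℝ)*(lam+lm)*(∑ i, X g i t * y i)
          - (lm-lam)*(∑ i, X g i t * vb i))^2)
        + Real.sqrt (∑ t, (∑ i, X g i t * w i)^2) := by
    have h := bedpp_aux_tri Finset.univ
      (fun t => (n:ℝ)*(lam+lm)*(∑ i, X g i t * y i) - (lm-lam)*(∑ i, X g i t * vb i))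
      (fun t => ∑ i, X g i t * w i)
    have e9 : ∑ t, (2*(n:ℝ)*lm * (∑ i, X g i t * r i))^2
        = ∑ t, (((n:ℝ)*(lam+lm)*(∑ i, X g i t * y i)
            - (lm-lam)*(∑ i, X g i t * vb i)) + (∑ i, X g i t * w i))^2 :=
      Finset.sum_congr rfl fun t _ => by rw [hdec t]
    rw [e9]
    exact h
  have hLHSeq : Real.sqrt (∑ t, (2*(n:ℝ)*lm * (∑ i, X g i t * r i))^2)
      = 2*(n:ℝ)*lm * Real.sqrt (∑ t, (∑ i, X g i t * r i)^2) := by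
    have e10 : ∑ t, (2*(n:ℝ)*lm * (∑ i, X g i t * r i))^2
        = (2*(n:ℝ)*lm)^2 * ∑ t, (∑ i, X g i t * r i)^2 := by
      rw [Finset.mul_sum]
      exact Finset.sum_congr rfl fun t _ => by ring
    rw [e10, Real.sqrt_mul (sq_nonneg _), Real.sqrt_sq (by positivity)]
  have hUeq : Real.sqrt (∑ t, ((n:ℝ)*(lam+lm)*(∑ i, X g i t * y i)
        - (lm-lam)*(∑ i, X g i t * vb i))^2)
      = (n:ℝ) * Real.sqrt ((lam + lm) ^ 2 * (∑ t, (∑ i, X g i t * y i) ^ 2) -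
          (2 * (lm ^ 2 - lam ^ 2) / (n : ℝ)) *
            (∑ t, (∑ i, X g i t * y i) * (∑ i, X g i t * vb i)) +
          ((lm - lam) ^ 2 / (n : ℝ) ^ 2) * (∑ t, (∑ i, X g i t * vb i) ^ 2)) := by
    have e11 : ∑ t, ((n:ℝ)*(lam+lm)*(∑ i, X g i t * y i)
          - (lm-lam)*(∑ i, X g i t * vb i))^2
        = (n:ℝ)^2 * ((lam + lm) ^ 2 * (∑ t, (∑ i, X g i t * y i) ^ 2) -
            (2 * (lm ^ 2 - lam ^ 2) / (n : ℝ)) *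
              (∑ t, (∑ i, X g i t * y i) * (∑ i, X g i t * vb i)) +
            ((lm - lam) ^ 2 / (n : ℝ) ^ 2) * (∑ t, (∑ i, X g i t * vb i) ^ 2)) := by
      have e12 : ∑ t, ((n:ℝ)*(lam+lm)*(∑ i, X g i t * y i)
            - (lm-lam)*(∑ i, X g i t * vb i))^2
          = ((n:ℝ)*(lam+lm))^2 * (∑ t, (∑ i, X g i t * y i)^2)
            - 2*((n:ℝ)*(lam+lm))*(lm-lam) *
              (∑ t, (∑ i, X g i t * y i) * (∑ i, X g i t * vb i))
            + (lm-lam)^2 * (∑ t, (∑ i, X g i t * vb i)^2) := by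
        have e13 : ∀ t : Fin (W g), ((n:ℝ)*(lam+lm)*(∑ i, X g i t * y i)
              - (lm-lam)*(∑ i, X g i t * vb i))^2
            = ((n:ℝ)*(lam+lm))^2 * (∑ i, X g i t * y i)^2
              - 2*((n:ℝ)*(lam+lm))*(lm-lam) *
                ((∑ i, X g i t * y i) * (∑ i, X g i t * vb i))
              + (lm-lam)^2 * (∑ i, X g i t * vb i)^2 := fun t => by ring
        rw [Finset.sum_congr rfl fun t _ => e13 t]
        simp only [Finset.sum_add_distrib, Finset.sum_sub_distrib, ← Finset.mul_sum]
      rw [e12]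
      field_simp
      ring
    rw [e11, Real.sqrt_mul (sq_nonneg _), Real.sqrt_sq hn'.le]
  -- combine: strict bound on the correlation norm
  have hkey : Real.sqrt (∑ t, (∑ i, X g i t * r i)^2) < (n:ℝ)*lam*Real.sqrt (W g) := by
    have hrulen := mul_lt_mul_of_pos_left hrule hn'
    have hchain : 2*(n:ℝ)*lm * Real.sqrt (∑ t, (∑ i, X g i t * r i)^2)
        < 2*(n:ℝ)*lm * ((n:ℝ)*lam*Real.sqrt (W g)) := by
      rw [← hLHSeq]
      calc Real.sqrt (∑ t, (2*(n:ℝ)*lm * (∑ i, X g i t * r i))^2)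
          ≤ _ + _ := htri2
        _ ≤ (n:ℝ) * Real.sqrt ((lam + lm) ^ 2 * (∑ t, (∑ i, X g i t * y i) ^ 2) -
              (2 * (lm ^ 2 - lam ^ 2) / (n : ℝ)) *
                (∑ t, (∑ i, X g i t * y i) * (∑ i, X g i t * vb i)) +
              ((lm - lam) ^ 2 / (n : ℝ) ^ 2) * (∑ t, (∑ i, X g i t * vb i) ^ 2))
            + ((lm-lam)*(n:ℝ)) *
              Real.sqrt ((n:ℝ)*(∑ i, (y i)^2) - (n:ℝ)^2*lm^2*(W gstar)) := by
            rw [hUeq]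
            exact add_le_add le_rfl hsqrtXw
        _ < 2*(n:ℝ)*lm * ((n:ℝ)*lam*Real.sqrt (W g)) := by nlinarith [hrulen]
    exact lt_of_mul_lt_mul_left hchain (by positivity)
  -- conclude
  have hzero : ∑ t, (βh g t)^2 = 0 := by
    by_contra hne
    have hpos : 0 < ∑ t, (βh g t)^2 :=
      lt_of_le_of_ne (by positivity) (Ne.symm hne)
    have hs : 0 < Real.sqrt (∑ t, (βh g t)^2) := Real.sqrt_pos.mpr hpos
    have hF2g := hF2 g
    have hswap := bedpp_aux_swap (X g) r (βh g)
    rw [hswap] at hF2g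
    have cs := Real.sum_mul_le_sqrt_mul_sqrt Finset.univ
      (fun t => βh g t) (fun t => ∑ i, X g i t * r i)
    nlinarith [hF2g, cs, hkey, hs, Real.sqrt_nonneg (∑ t, (∑ i, X g i t * r i)^2)]
  funext t
  have h := (Finset.sum_eq_zero_iff_of_nonneg
    (fun t _ => sq_nonneg (βh g t))).mp hzero t (Finset.mem_univ t)
  exact (pow_eq_zero_iff two_ne_zero).mp h
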